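/- Every symmetric square-free infinite ternary word U satisfies p_U(n) ≥ 6n − 6 for all n ≥ 2. Consequently, 6n − 6 is a lower bound on the minimum subword complexity over all symmetric square-free infinite ternary words. -/

import Mathlib

/-- The factor of the infinite word `u` of length `m` starting at position `i`. -/
def factorAt {k : ℕ} (u : ℕ → Fin k) (i m : ℕ) : List (Fin k) :=
  (List.range m).map fun j => u (i + j)

/-- `v` is a factor of the infinite word `u`. -/
def IsFactor {k : ℕ} (v : List (Fin k)) (u : ℕ → Fin k) : Prop :=
  ∃ i, v = factorAt u i v.length

/-- Subword complexity: the number of distinct factors of length `n`. -/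
noncomputable def complexity {k : ℕ} (u : ℕ → Fin k) (n : ℕ) : ℕ :=
  Set.ncard {v : List (Fin k) | v.length = n ∧ IsFactor v u}

/-- The word `w` has period `q` (`1 ≤ q ≤ |w|`, and `w(i) = w(i+q)` whenever defined). -/
def HasPer {A : Type*} (w : List A) (q : ℕ) : Prop :=
  1 ≤ q ∧ q ≤ w.length ∧ ∀ i, i + q < w.length → w[i]? = w[i + q]?

/-- The minimal period of a finite word. -/
noncomputable def minPer {A : Type*} (w : List A) : ℕ := sInf {q | HasPer w q}

/-- The exponent of a finite word: its length divided by its minimal period. -/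
noncomputable def exponent {A : Type*} (w : List A) : ℝ := (w.length : ℝ) / (minPer w : ℝ)

/-- `u` is `α`-power-free: no nonempty factor has exponent `≥ α`. -/
def PowerFree {k : ℕ} (α : ℝ) (u : ℕ → Fin k) : Prop :=
  ∀ v : List (Fin k), v ≠ [] → IsFactor v u → exponent v < α

/-- `u` is `α⁺`-power-free: no nonempty factor has exponent `> α`. -/
def PowerFreePlus {k : ℕ} (α : ℝ) (u : ℕ → Fin k) : Prop :=
  ∀ v : List (Fin k), v ≠ [] → IsFactor v u → exponent v ≤ α

/-- Overlap-free means `2⁺`-power-free. -/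
def OverlapFree {k : ℕ} (u : ℕ → Fin k) : Prop := PowerFreePlus 2 u

open Fin.NatCast in
/-- The Thue–Morse word: `t n` is the number of 1's, mod 2, in the binary expansion of `n`. -/
def thueMorse : ℕ → Fin 2 := fun n => ((Nat.digits 2 n).count 1 : Fin 2)

/-- A word is symmetric if its factor set is invariant under every permutation of the alphabet. -/
def SymmetricW {k : ℕ} (u : ℕ → Fin k) : Prop :=
  ∀ f : Equiv.Perm (Fin k), ∀ v : List (Fin k), IsFactor v u → IsFactor (v.map f) u

/-- A word is square-free if it contains no nonempty factor of the form `x ++ x`. -/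
def SquareFreeW {k : ℕ} (u : ℕ → Fin k) : Prop :=
  ∀ x : List (Fin k), x ≠ [] → ¬ IsFactor (x ++ x) u

/-!
A square-free word is not eventually periodic, so for every `n` some factor `w` of length `n`
is right special: `wa` and `wb` are factors for two letters `a ≠ b`. Since every factor of
length `n + 1` extends a factor of length `n`, and right-special factors extend in at least two
ways, `p(n + 1) ≥ p(n) + #{right-special factors of length n}`. In a square-free word every factor
of length `≥ 2` contains two distinct letters, so the six permutations of `{0, 1, 2}` move it to
six distinct words; by symmetry these are again (right-special) factors. Hence `p(2) ≥ 6` and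
`p(n + 1) ≥ p(n) + 6`.
-/

section Factors

variable {k : ℕ} {u : ℕ → Fin k}

theorem length_factorAt (u : ℕ → Fin k) (i m : ℕ) : (factorAt u i m).length = m := by
  simp [factorAt]

theorem isFactor_factorAt (u : ℕ → Fin k) (i m : ℕ) : IsFactor (factorAt u i m) u :=
  ⟨i, by rw [length_factorAt]⟩

theorem factorAt_eq_factorAt_iff {i j n : ℕ} :
    factorAt u i n = factorAt u j n ↔ ∀ l < n, u (i + l) = u (j + l) := by
  simp [factorAt, List.map_inj_left]

theorem factorAt_add (u : ℕ → Fin k) (i m m' : ℕ) :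
    factorAt u i (m + m') = factorAt u i m ++ factorAt u (i + m) m' := by
  simp [factorAt, List.range_add, Nat.add_assoc]

theorem factorAt_succ (u : ℕ → Fin k) (i m : ℕ) :
    factorAt u i (m + 1) = factorAt u i m ++ [u (i + m)] := by
  simp [factorAt, List.range_succ]

theorem factorAt_succ_eq_cons (u : ℕ → Fin k) (i m : ℕ) :
    factorAt u i (m + 1) = u i :: factorAt u (i + 1) m := by
  rw [Nat.add_comm m, factorAt_add]
  simp [factorAt]

theorem finite_setOf_isFactor (u : ℕ → Fin k) (n : ℕ) :
    {v : List (Fin k) | v.length = n ∧ IsFactor v u}.Finite :=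
  (List.finite_length_eq (Fin k) n).subset fun _ hv => hv.1

noncomputable def factors (u : ℕ → Fin k) (n : ℕ) : Finset (List (Fin k)) :=
  (finite_setOf_isFactor u n).toFinset

theorem complexity_eq_card_factors (u : ℕ → Fin k) (n : ℕ) :
    complexity u n = (factors u n).card :=
  Set.ncard_eq_toFinset_card _ _

theorem mem_factors {n : ℕ} {v : List (Fin k)} :
    v ∈ factors u n ↔ v.length = n ∧ IsFactor v u :=
  Set.Finite.mem_toFinset _

theorem mem_factors_iff_exists {n : ℕ} {v : List (Fin k)} :
    v ∈ factors u n ↔ ∃ i, factorAt u i n = v := by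
  rw [mem_factors]
  refine ⟨fun ⟨hl, i, hv⟩ => ⟨i, by rw [← hl, ← hv]⟩, ?_⟩
  rintro ⟨i, rfl⟩
  exact ⟨length_factorAt u i n, isFactor_factorAt u i n⟩

theorem factorAt_mem_factors (u : ℕ → Fin k) (i n : ℕ) : factorAt u i n ∈ factors u n :=
  mem_factors_iff_exists.2 ⟨i, rfl⟩

theorem dropLast_mem_factors {n : ℕ} {v : List (Fin k)} (hv : v ∈ factors u (n + 1)) :
    v.dropLast ∈ factors u n := by
  obtain ⟨i, rfl⟩ := mem_factors_iff_exists.1 hv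
  rw [factorAt_succ, List.dropLast_concat]
  exact factorAt_mem_factors u i n

theorem exists_append_singleton_mem_factors {n : ℕ} {w : List (Fin k)} (hw : w ∈ factors u n) :
    ∃ c, w ++ [c] ∈ factors u (n + 1) := by
  obtain ⟨i, rfl⟩ := mem_factors_iff_exists.1 hw
  exact ⟨u (i + n), factorAt_succ u i n ▸ factorAt_mem_factors u i (n + 1)⟩

theorem SymmetricW.map_mem_factors (hsym : SymmetricW u) (f : Equiv.Perm (Fin k)) {n : ℕ}
    {w : List (Fin k)} (hw : w ∈ factors u n) : w.map f ∈ factors u n := by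
  rw [mem_factors] at hw ⊢
  exact ⟨by rw [List.length_map, hw.1], hsym f w hw.2⟩

end Factors

section RightSpecial

variable {k : ℕ} {u : ℕ → Fin k}

def IsRightSpecial (u : ℕ → Fin k) (w : List (Fin k)) : Prop :=
  ∃ a b, a ≠ b ∧ IsFactor (w ++ [a]) u ∧ IsFactor (w ++ [b]) u

theorem IsRightSpecial.map (hsym : SymmetricW u) (f : Equiv.Perm (Fin k)) {w : List (Fin k)}
    (hw : IsRightSpecial u w) : IsRightSpecial u (w.map f) := by
  obtain ⟨a, b, hab, ha, hb⟩ := hw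
  refine ⟨f a, f b, f.injective.ne hab, ?_, ?_⟩
  · simpa using hsym f _ ha
  · simpa using hsym f _ hb

open Classical in
theorem card_factors_add_card_rightSpecial_le (u : ℕ → Fin k) (n : ℕ) :
    (factors u n).card + ((factors u n).filter (IsRightSpecial u)).card ≤
      (factors u (n + 1)).card := by
  have fiber_mem {w : List (Fin k)} {c : Fin k} (hw : w ∈ factors u n)
      (hc : IsFactor (w ++ [c]) u) :
      w ++ [c] ∈ (factors u (n + 1)).filter (·.dropLast = w) := by
    simp [mem_factors, (mem_factors.1 hw).1, hc]
  have card_fiber (w : List (Fin k)) (hw : w ∈ factors u n) :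
      1 + (if IsRightSpecial u w then 1 else 0) ≤
        ((factors u (n + 1)).filter (·.dropLast = w)).card := by
    split_ifs with hrs
    · obtain ⟨a, b, hab, ha, hb⟩ := hrs
      calc 1 + 1 = ({w ++ [a], w ++ [b]} : Finset _).card := by
            rw [Finset.card_pair (by simpa using hab)]
        _ ≤ _ := Finset.card_le_card <| by
            simp [Finset.insert_subset_iff, fiber_mem hw ha, fiber_mem hw hb]
    · obtain ⟨c, hc⟩ := exists_append_singleton_mem_factors hw
      exact Finset.card_pos.2 ⟨_, fiber_mem hw (mem_factors.1 hc).2⟩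
  calc (factors u n).card + ((factors u n).filter (IsRightSpecial u)).card
      = ∑ w ∈ factors u n, (1 + if IsRightSpecial u w then 1 else 0) := by
        rw [Finset.sum_add_distrib, Finset.card_filter, Finset.card_eq_sum_ones]
    _ ≤ ∑ w ∈ factors u n, ((factors u (n + 1)).filter (·.dropLast = w)).card :=
        Finset.sum_le_sum card_fiber
    _ = (factors u (n + 1)).card :=
        (Finset.card_eq_sum_card_fiberwise fun _ hv => dropLast_mem_factors hv).symm

theorem exists_periodic_of_forall_not_isRightSpecial {n : ℕ}
    (h : ∀ w ∈ factors u n, ¬ IsRightSpecial u w) :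
    ∃ i p, 0 < p ∧ ∀ m, u (i + m) = u (i + p + m) := by
  have next_eq {i j : ℕ} (hij : factorAt u i n = factorAt u j n) : u (i + n) = u (j + n) := by
    by_contra hne
    refine h _ (factorAt_mem_factors u i n) ⟨_, _, hne, ?_, ?_⟩
    · exact factorAt_succ u i n ▸ isFactor_factorAt u i (n + 1)
    · exact hij ▸ factorAt_succ u j n ▸ isFactor_factorAt u j (n + 1)
  obtain ⟨i, j, hij, heq⟩ := Set.Finite.exists_lt_map_eq_of_forall_mem
    (f := fun i => factorAt u i n) (fun i => factorAt_mem_factors u i n)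
    (factors u n).finite_toSet
  have shift (m : ℕ) : factorAt u (i + m) n = factorAt u (j + m) n := by
    induction m with
    | zero => exact heq
    | succ m ih =>
      have hlong : factorAt u (i + m) (n + 1) = factorAt u (j + m) (n + 1) := by
        rw [factorAt_succ, factorAt_succ, ih, next_eq ih]
      simpa [factorAt_succ_eq_cons, Nat.add_assoc] using congrArg List.tail hlong
  obtain ⟨p, rfl⟩ := Nat.exists_eq_add_of_lt hij
  refine ⟨i + n, p + 1, p.succ_pos, fun m => ?_⟩
  convert next_eq (shift m) using 2 <;> omega

end RightSpecial

section SquareFree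

variable {k : ℕ} {u : ℕ → Fin k}

theorem SquareFreeW.apply_ne_apply_succ (hsf : SquareFreeW u) (i : ℕ) : u i ≠ u (i + 1) := by
  intro h
  apply hsf [u i] (List.cons_ne_nil _ _) ⟨i, ?_⟩
  simp [factorAt, List.range_succ, h]

theorem SquareFreeW.not_periodic (hsf : SquareFreeW u) {i p : ℕ} (hp : 0 < p) :
    ¬ ∀ m, u (i + m) = u (i + p + m) := by
  intro hper
  apply hsf (factorAt u i p) (List.ne_nil_of_length_pos (by rwa [length_factorAt])) ⟨i, ?_⟩
  rw [List.length_append, length_factorAt, factorAt_add]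
  exact congrArg _ (factorAt_eq_factorAt_iff.2 fun l _ => hper l)

theorem SquareFreeW.exists_isRightSpecial (hsf : SquareFreeW u) (n : ℕ) :
    ∃ w ∈ factors u n, IsRightSpecial u w := by
  by_contra! h
  obtain ⟨i, p, hp, hper⟩ := exists_periodic_of_forall_not_isRightSpecial h
  exact hsf.not_periodic hp hper

theorem SquareFreeW.exists_mem_ne {n : ℕ} (hsf : SquareFreeW u) (hn : 2 ≤ n)
    {w : List (Fin k)} (hw : w ∈ factors u n) : ∃ a ∈ w, ∃ b ∈ w, a ≠ b := by
  obtain ⟨i, rfl⟩ := mem_factors_iff_exists.1 hw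
  refine ⟨u (i + 0), ?_, u (i + 1), ?_, hsf.apply_ne_apply_succ i⟩ <;>
    exact List.mem_map.2 ⟨_, List.mem_range.2 (by omega), rfl⟩

end SquareFree

theorem perm_fin_three_eq_one_of_fixes_two :
    ∀ (f : Equiv.Perm (Fin 3)) (a b : Fin 3), a ≠ b → f a = a → f b = b → f = 1 := by
  decide

theorem six_le_card_of_forall_map_mem {S : Finset (List (Fin 3))} {w : List (Fin 3)}
    {a b : Fin 3} (ha : a ∈ w) (hb : b ∈ w) (hab : a ≠ b)
    (hS : ∀ f : Equiv.Perm (Fin 3), w.map f ∈ S) : 6 ≤ S.card := by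
  have map_injective : Function.Injective fun f : Equiv.Perm (Fin 3) => w.map f := by
    intro f g hfg
    have hfix (x : Fin 3) (hx : x ∈ w) : (g⁻¹ * f) x = x := by
      simp [List.map_inj_left.1 hfg x hx]
    exact (inv_mul_eq_one.1 <|
      perm_fin_three_eq_one_of_fixes_two _ a b hab (hfix a ha) (hfix b hb)).symm
  calc 6 = (Finset.univ.image fun f : Equiv.Perm (Fin 3) => w.map f).card := by
        rw [Finset.card_image_of_injective _ map_injective, Finset.card_univ, Fintype.card_perm]
        rfl
    _ ≤ S.card := Finset.card_le_card fun v hv => by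
        obtain ⟨f, -, rfl⟩ := Finset.mem_image.1 hv
        exact hS f

/-- Every symmetric square-free infinite ternary word has subword complexity
at least `6n - 6` for all `n ≥ 2`. -/
theorem symmetric_squarefree_lower_bound (U : ℕ → Fin 3)
    (hsf : SquareFreeW U) (hsym : SymmetricW U) :
    ∀ n, 2 ≤ n → 6 * n - 6 ≤ complexity U n := by
  intro n hn
  induction n, hn using Nat.le_induction with
  | base =>
    obtain ⟨a, ha, b, hb, hab⟩ := hsf.exists_mem_ne le_rfl (factorAt_mem_factors U 0 2)
    rw [complexity_eq_card_factors]
    exact six_le_card_of_forall_map_mem ha hb hab fun f =>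
      hsym.map_mem_factors f (factorAt_mem_factors U 0 2)
  | succ n hn ih =>
    classical
    obtain ⟨w, hw, hrs⟩ := hsf.exists_isRightSpecial n
    obtain ⟨a, ha, b, hb, hab⟩ := hsf.exists_mem_ne hn hw
    have six_le_rightSpecial : 6 ≤ ((factors U n).filter (IsRightSpecial U)).card :=
      six_le_card_of_forall_map_mem ha hb hab fun f =>
        Finset.mem_filter.2 ⟨hsym.map_mem_factors f hw, hrs.map hsym f⟩
    have step := card_factors_add_card_rightSpecial_le U n
    rw [complexity_eq_card_factors] at ih ⊢
    omega
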